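/- arXiv:1603.06513 — 4 statements merged into one kernel-verified Lean document; each statement's English description precedes it below -/
import Mathlib

section
/- A median graph (equivalently, the 1-skeleton of a CAT(0) cube complex) is hyperbolic if and only if its bigons are uniformly thin: there exists δ such that any two geodesics with the same endpoints are at Hausdorff distance at most δ. More precisely, if all bigons are δ-thin then the graph is 2δ-hyperbolic (geodesic triangles are 2δ-thin). -/
def IsMedian {V : Type} (G : SimpleGraph V) (x y z m : V) : Prop :=
  G.dist x y = G.dist x m + G.dist m y ∧
  G.dist x z = G.dist x m + G.dist m z ∧
  G.dist y z = G.dist y m + G.dist m z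

def BigonsThin {V : Type} (G : SimpleGraph V) (δ : ℕ) : Prop :=
  ∀ ⦃x y : V⦄ (γ₁ γ₂ : G.Walk x y),
    γ₁.length = G.dist x y → γ₂.length = G.dist x y →
    ∀ p ∈ γ₁.support, ∃ q ∈ γ₂.support, G.dist p q ≤ δ

def TrianglesThin {V : Type} (G : SimpleGraph V) (δ : ℕ) : Prop :=
  ∀ ⦃x y z : V⦄ (wxy : G.Walk x y) (wyz : G.Walk y z) (wxz : G.Walk x z),
    wxy.length = G.dist x y → wyz.length = G.dist y z → wxz.length = G.dist x z →
    ∀ p ∈ wxy.support, ∃ q, (q ∈ wyz.support ∨ q ∈ wxz.support) ∧ G.dist p q ≤ δ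

/-- A median graph (the 1-skeleton of a CAT(0) cube complex) is hyperbolic iff its
bigons are uniformly thin; more precisely, if all bigons are δ-thin then all geodesic
triangles are 2δ-thin. -/
theorem stmt_6 {V : Type} (G : SimpleGraph V) (hconn : G.Connected)
    (hmed : ∀ x y z : V, ∃! m : V, IsMedian G x y z m) :
    ((∃ δ : ℕ, TrianglesThin G δ) ↔ (∃ δ : ℕ, BigonsThin G δ)) ∧
    (∀ δ : ℕ, BigonsThin G δ → TrianglesThin G (2 * δ)) := by
  have main : ∀ δ : ℕ, BigonsThin G δ → TrianglesThin G (2 * δ) := by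
    intro δ hbig x y z wxy wyz wxz hxy hyz hxz p hp
    obtain ⟨m, ⟨h1, h2, h3⟩, -⟩ := hmed x y z
    obtain ⟨wxm, hwxm⟩ := hconn.exists_walk_length_eq_dist x m
    obtain ⟨wmy, hwmy⟩ := hconn.exists_walk_length_eq_dist m y
    obtain ⟨wmz, hwmz⟩ := hconn.exists_walk_length_eq_dist m z
    -- bigon between wxy and x→m→y
    have hlen1 : (wxm.append wmy).length = G.dist x y := by
      rw [SimpleGraph.Walk.length_append, hwxm, hwmy, h1]
    obtain ⟨q, hq, hpq⟩ := hbig wxy (wxm.append wmy) hxy hlen1 p hp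
    rw [SimpleGraph.Walk.mem_support_append_iff] at hq
    rcases hq with hq | hq
    · -- q on x→m; compare x→m→z with wxz
      have hlen2 : (wxm.append wmz).length = G.dist x z := by
        rw [SimpleGraph.Walk.length_append, hwxm, hwmz, h2]
      have hq' : q ∈ (wxm.append wmz).support :=
        (SimpleGraph.Walk.mem_support_append_iff _ _).2 (Or.inl hq)
      obtain ⟨r, hr, hqr⟩ := hbig (wxm.append wmz) wxz hlen2 hxz q hq'
      refine ⟨r, Or.inr hr, ?_⟩
      calc G.dist p r ≤ G.dist p q + G.dist q r := hconn.dist_triangle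
        _ ≤ δ + δ := Nat.add_le_add hpq hqr
        _ = 2 * δ := (two_mul δ).symm
    · -- q on m→y; compare y→m→z with wyz
      have hlen3 : (wmy.reverse.append wmz).length = G.dist y z := by
        rw [SimpleGraph.Walk.length_append, SimpleGraph.Walk.length_reverse,
          hwmy, hwmz, h3]
        exact congrArg (· + G.dist m z) SimpleGraph.dist_comm
      have hq' : q ∈ (wmy.reverse.append wmz).support :=
        (SimpleGraph.Walk.mem_support_append_iff _ _).2
          (Or.inl (by rwa [SimpleGraph.Walk.support_reverse, List.mem_reverse]))
      obtain ⟨r, hr, hqr⟩ := hbig (wmy.reverse.append wmz) wyz hlen3 hyz q hq'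
      refine ⟨r, Or.inl hr, ?_⟩
      calc G.dist p r ≤ G.dist p q + G.dist q r := hconn.dist_triangle
        _ ≤ δ + δ := Nat.add_le_add hpq hqr
        _ = 2 * δ := (two_mul δ).symm
  refine ⟨⟨?_, fun ⟨δ, h⟩ => ⟨2 * δ, main δ h⟩⟩, main⟩
  rintro ⟨δ, htri⟩
  refine ⟨δ, fun x y γ₁ γ₂ h1 h2 p hp => ?_⟩
  obtain ⟨q, hq, hd⟩ := htri γ₁ (SimpleGraph.Walk.nil : G.Walk y y) γ₂ h1
    (SimpleGraph.dist_self (v := y)).symm h2 p hp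
  rcases hq with hq | hq
  · simp only [SimpleGraph.Walk.support_nil, List.mem_singleton] at hq
    exact ⟨y, SimpleGraph.Walk.end_mem_support γ₂, hq ▸ hd⟩
  · exact ⟨q, hq, hd⟩
end

section
/- The n-dimensional cube [0,1]ⁿ, viewed as a cube complex, contains a combinatorially isometrically embedded flat rectangle [0, ⌊n/2⌋] × [0, n − ⌊n/2⌋]; in particular a hyperbolic CAT(0) cube complex with all flat rectangles L-thin has dimension at most 2L+1. -/
open Finset

private lemma count_aux (n h i i' j j' : ℕ) (hh : h ≤ n) (hi : i ≤ h) (hi' : i' ≤ h)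
    (hj : j ≤ n - h) (hj' : j' ≤ n - h) :
    ((Finset.range n).filter (fun k =>
        (if k < h then decide (k < i) else decide (k - h < j)) ≠
        (if k < h then decide (k < i') else decide (k - h < j')))).card
      = Nat.dist i i' + Nat.dist j j' := by
  have hsplit : Finset.range n = Finset.range h ∪ Finset.Ico h n := by
    ext k; simp [Finset.mem_Ico, Finset.mem_range]; omega
  rw [hsplit, Finset.filter_union, Finset.card_union_of_disjoint]
  · have h1 : (Finset.range h).filter (fun k =>
        (if k < h then decide (k < i) else decide (k - h < j)) ≠
        (if k < h then decide (k < i') else decide (k - h < j'))) =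
        Finset.Ico (min i i') (max i i') := by
      ext k
      simp only [Finset.mem_filter, Finset.mem_range, Finset.mem_Ico, ne_eq]
      constructor
      · rintro ⟨hk, hne⟩
        rw [if_pos hk, if_pos hk, decide_eq_decide] at hne
        omega
      · intro hk
        have hkh : k < h := by omega
        rw [if_pos hkh, if_pos hkh, decide_eq_decide]
        omega
    have h2 : (Finset.Ico h n).filter (fun k =>
        (if k < h then decide (k < i) else decide (k - h < j)) ≠
        (if k < h then decide (k < i') else decide (k - h < j'))) =
        Finset.Ico (h + min j j') (h + max j j') := by
      ext k
      simp only [Finset.mem_filter, Finset.mem_Ico, ne_eq]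
      constructor
      · rintro ⟨hk, hne⟩
        have hkh : ¬ k < h := by omega
        rw [if_neg hkh, if_neg hkh, decide_eq_decide] at hne
        omega
      · intro hk
        have hkh : ¬ k < h := by omega
        refine ⟨⟨by omega, by omega⟩, ?_⟩
        rw [if_neg hkh, if_neg hkh, decide_eq_decide]
        omega
    rw [h1, h2, Nat.card_Ico, Nat.card_Ico, Nat.dist, Nat.dist]
    omega
  · exact Finset.disjoint_filter_filter (by
      simp [Finset.disjoint_left, Finset.mem_Ico]; omega)

private lemma embed_aux (n : ℕ) :
    ∃ f : Fin (n / 2 + 1) × Fin (n - n / 2 + 1) → (Fin n → Bool),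
      ∀ p q : Fin (n / 2 + 1) × Fin (n - n / 2 + 1),
        hammingDist (f p) (f q) = Nat.dist p.1.val q.1.val + Nat.dist p.2.val q.2.val := by
  refine ⟨fun p k => if k.val < n / 2 then decide (k.val < p.1.val)
    else decide (k.val - n / 2 < p.2.val), fun p q => ?_⟩
  have h := count_aux n (n / 2) p.1.val q.1.val p.2.val q.2.val
    (Nat.div_le_self n 2) (Nat.lt_succ_iff.mp p.1.isLt) (Nat.lt_succ_iff.mp q.1.isLt)
    (Nat.lt_succ_iff.mp p.2.isLt) (Nat.lt_succ_iff.mp q.2.isLt)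
  rw [← h, hammingDist, Finset.card_filter, Finset.card_filter,
    Fin.sum_univ_eq_sum_range (fun k => if (if k < n / 2 then decide (k < p.1.val)
      else decide (k - n / 2 < p.2.val)) ≠ (if k < n / 2 then decide (k < q.1.val)
      else decide (k - n / 2 < q.2.val)) then 1 else 0) n]

/-- The `n`-cube `[0,1]ⁿ` (vertices `Fin n → Bool`, combinatorial metric = Hamming
distance) contains a combinatorially isometrically embedded flat rectangle
`[0, ⌊n/2⌋] × [0, n − ⌊n/2⌋]`; in particular, if every flat rectangle
`[0,a] × [0,b]` isometrically embedded in the cube satisfies `min(a,b) ≤ L`, then the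
dimension `n` is at most `2L+1` (equivalently: as soon as `n ≥ 2L+2`, the cube contains
an isometrically embedded rectangle with both sides at least `L+1`). -/
theorem stmt_8 (n L : ℕ) :
    (∃ f : Fin (n / 2 + 1) × Fin (n - n / 2 + 1) → (Fin n → Bool),
      ∀ p q : Fin (n / 2 + 1) × Fin (n - n / 2 + 1),
        hammingDist (f p) (f q) = Nat.dist p.1.val q.1.val + Nat.dist p.2.val q.2.val) ∧
    (2 * L + 2 ≤ n →
      ∃ (a b : ℕ), L + 1 ≤ a ∧ L + 1 ≤ b ∧
        ∃ f : Fin (a + 1) × Fin (b + 1) → (Fin n → Bool),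
          ∀ p q : Fin (a + 1) × Fin (b + 1),
            hammingDist (f p) (f q) = Nat.dist p.1.val q.1.val + Nat.dist p.2.val q.2.val) := by
  refine ⟨embed_aux n, fun hn => ⟨n / 2, n - n / 2, by omega, by omega, embed_aux n⟩⟩
end

section
/- For any bigon {γ₁, γ₂} in a CAT(0) cube complex with endpoints x, y, and any vertices z ∈ γ₁, z' ∈ γ₂, the vertex z equals the median m(z, m(x,z,z'), m(y,z,z')). -/
/-- An abstract combinatorial model of a CAT(0) cube complex: a set of vertices `V`
together with a set of hyperplanes (walls) `H`, each hyperplane dividing the vertices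
into two halfspaces via `side`.  Two hyperplanes are transverse exactly when they cross
(all four quadrants are inhabited), and only finitely many hyperplanes separate two
given vertices. -/
structure CCC where
  V : Type
  H : Type
  side : H → V → Prop
  transverse : H → H → Prop
  transverse_symm : ∀ h h', transverse h h' → transverse h' h
  transverse_iff : ∀ h h', transverse h h' ↔ (h ≠ h' ∧ ∃ a b c d : V,
      (side h a ∧ side h' a) ∧ (side h b ∧ ¬ side h' b) ∧
      (¬ side h c ∧ side h' c) ∧ (¬ side h d ∧ ¬ side h' d))
  finsep : ∀ x y : V, {h : H | ¬ (side h x ↔ side h y)}.Finite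

namespace CCC

variable (W : CCC)

/-- The hyperplane `h` separates the vertices `x` and `y`. -/
def Sep (h : W.H) (x y : W.V) : Prop := ¬ (W.side h x ↔ W.side h y)

/-- The combinatorial (ℓ¹) distance between vertices: the number of separating
hyperplanes. -/
noncomputable def dist (x y : W.V) : ℕ := {h : W.H | W.Sep h x y}.ncard

/-- Two hyperplanes are disjoint if they are distinct and not transverse. -/
def Disj (h h' : W.H) : Prop := h ≠ h' ∧ ¬ W.transverse h h'

/-- The ℓ∞ distance between vertices: the maximal number of pairwise disjoint
hyperplanes separating them. -/
noncomputable def dinf (x y : W.V) : ℕ :=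
  sSup {n : ℕ | ∃ S : Finset W.H, S.card = n ∧ (∀ h ∈ S, W.Sep h x y) ∧
    (S : Set W.H).Pairwise W.Disj}

/-- A set of vertices is combinatorially convex if it contains every vertex lying on a
combinatorial geodesic between two of its points. -/
def Convex (C : Set W.V) : Prop :=
  ∀ x ∈ C, ∀ y ∈ C, ∀ z : W.V, W.dist x z + W.dist z y = W.dist x y → z ∈ C

theorem dist_comm (x y : W.V) : W.dist x y = W.dist y x := by
  unfold dist
  congr 1
  ext h
  simp only [Set.mem_setOf_eq, Sep]
  tauto

theorem dist_self (x : W.V) : W.dist x x = 0 := by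
  have h : {h : W.H | W.Sep h x x} = ∅ := by ext h; simp [Sep]
  simp [dist, h]

/-- The 1-skeleton of the cube complex: two vertices are adjacent when exactly one
hyperplane separates them. -/
def oneSkeleton : SimpleGraph W.V where
  Adj x y := W.dist x y = 1
  symm := ⟨fun x y hxy => (W.dist_comm y x).trans hxy⟩
  loopless := ⟨fun x hx => by have := W.dist_self x; omega⟩

/-- `m` is a median vertex of `x`, `y`, `z`. -/
def IsMedian (x y z m : W.V) : Prop :=
  W.dist x y = W.dist x m + W.dist m y ∧
  W.dist x z = W.dist x m + W.dist m z ∧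
  W.dist y z = W.dist y m + W.dist m z

/-- The hyperplane `J` separates the hyperplanes `A` and `B`: all of `A` lies in one
halfspace of `J` and all of `B` in the other. -/
def SepHH (J A B : W.H) : Prop :=
  ((∀ x y : W.V, W.Sep A x y → W.side J x) ∧ (∀ x y : W.V, W.Sep B x y → ¬ W.side J x)) ∨
  ((∀ x y : W.V, W.Sep A x y → ¬ W.side J x) ∧ (∀ x y : W.V, W.Sep B x y → W.side J x))

/-- A `(p,q)`-grid of hyperplanes: two families of hyperplanes, each hyperplane of the
first transverse to each of the second, and inside each family every hyperplane
separates its two neighbours. -/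
def IsGrid {p q : ℕ} (v : Fin p → W.H) (hh : Fin q → W.H) : Prop :=
  Function.Injective v ∧ Function.Injective hh ∧
  (∀ (i : Fin p) (j : Fin q), W.transverse (v i) (hh j)) ∧
  (∀ i : Fin p, 0 < i.val → ∀ (hlt : i.val + 1 < p),
    W.SepHH (v i) (v ⟨i.val - 1, lt_of_le_of_lt (Nat.sub_le _ _) i.isLt⟩) (v ⟨i.val + 1, hlt⟩)) ∧
  (∀ j : Fin q, 0 < j.val → ∀ (hlt : j.val + 1 < q),
    W.SepHH (hh j) (hh ⟨j.val - 1, lt_of_le_of_lt (Nat.sub_le _ _) j.isLt⟩) (hh ⟨j.val + 1, hlt⟩))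

/-- A discrete geodesic for the ℓ∞ metric: a chain of vertices from `x` to `y`, each
step of `dinf`-length at most one, whose number of steps is `dinf x y`. -/
def IsInfGeodesic {n : ℕ} (x y : W.V) (f : Fin (n + 1) → W.V) : Prop :=
  f 0 = x ∧ f (Fin.last n) = y ∧ n = W.dinf x y ∧
  ∀ i : Fin n, W.dinf (f i.castSucc) (f i.succ) ≤ 1

end CCC

/-!
Write `Sep(a, b)` for the set of hyperplanes separating `a` and `b`. Since
`Sep(a, b) = Sep(a, m) ∆ Sep(m, b)`, the vertex `m` lies on a geodesic from `a` to `b` exactly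
when no hyperplane separates `m` from both `a` and `b`. A vertex `z` on a geodesic from `x` to
`y` therefore lies between `p = m(x, z, z')` and `q = m(y, z, z')`: a hyperplane separating `z`
from both `p` and `q` would, by the majority rule for medians, put `x`, `y` and `z'` on one side
and `z` on the other. A vertex between `p` and `q` is their median with itself.
-/

namespace CCC

variable (W : CCC)

def Between (a z b : W.V) : Prop := ∀ h, W.Sep h a z → ¬ W.Sep h z b

lemma Sep.symm {W : CCC} {h : W.H} {a b : W.V} (hab : W.Sep h a b) : W.Sep h b a :=
  fun hiff => hab hiff.symm

lemma dist_add_two_mul_ncard_inter (a m b : W.V) :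
    W.dist a b + 2 * ({h | W.Sep h a m} ∩ {h | W.Sep h m b}).ncard =
      W.dist a m + W.dist m b := by
  unfold dist
  set A := {h | W.Sep h a m}
  set B := {h | W.Sep h m b}
  have hA : A.Finite := W.finsep a m
  have hB : B.Finite := W.finsep m b
  have hsep : {h | W.Sep h a b} = (A ∪ B) \ (A ∩ B) := by
    ext h
    simp only [Set.mem_ofPred_eq, Set.mem_sdiff, Set.mem_union, Set.mem_inter_iff, A, B, Sep]
    tauto
  have hsub : A ∩ B ⊆ A ∪ B := Set.inter_subset_left.trans Set.subset_union_left
  have hle := Set.ncard_le_ncard hsub (hA.union hB)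
  have hunion := Set.ncard_union_add_ncard_inter A B hA hB
  rw [hsep, Set.ncard_sdiff' hsub (hA.union hB)]
  omega

lemma dist_eq_add_iff_between (a z b : W.V) :
    W.dist a b = W.dist a z + W.dist z b ↔ W.Between a z b := by
  have hcount := W.dist_add_two_mul_ncard_inter a z b
  have hfin : ({h | W.Sep h a z} ∩ {h | W.Sep h z b}).Finite := (W.finsep a z).inter_of_left _
  have hempty : ({h | W.Sep h a z} ∩ {h | W.Sep h z b}).ncard = 0 ↔ W.Between a z b := by
    simp only [Set.ncard_eq_zero hfin, Set.eq_empty_iff_forall_notMem, Set.mem_inter_iff,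
      Set.mem_ofPred_eq, not_and, Between]
  rw [← hempty]
  omega

lemma dist_triangle (a b c : W.V) : W.dist a c ≤ W.dist a b + W.dist b c := by
  have hcount := W.dist_add_two_mul_ncard_inter a b c
  omega

lemma dist_le_length {a b : W.V} (w : W.oneSkeleton.Walk a b) : W.dist a b ≤ w.length := by
  induction w with
  | nil => simp [dist_self]
  | @cons u v c hadj w ih =>
    have hstep : W.dist u v = 1 := hadj
    have htri := W.dist_triangle u v c
    rw [SimpleGraph.Walk.length_cons]
    omega

lemma between_of_mem_support_of_length_eq {a b : W.V} (w : W.oneSkeleton.Walk a b)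
    (hw : w.length = W.dist a b) {z : W.V} (hz : z ∈ w.support) : W.Between a z b := by
  classical
  have hsplit : (w.takeUntil z hz).length + (w.dropUntil z hz).length = w.length := by
    rw [← SimpleGraph.Walk.length_append, SimpleGraph.Walk.take_spec]
  have htake := W.dist_le_length (w.takeUntil z hz)
  have hdrop := W.dist_le_length (w.dropUntil z hz)
  have htri := W.dist_triangle a z b
  rw [← dist_eq_add_iff_between]
  omega

lemma IsMedian.side_iff_of_sep {W : CCC} {a b c m : W.V} (hm : W.IsMedian a b c m) {h : W.H}
    (hbm : W.Sep h b m) : (W.side h m ↔ W.side h a) ∧ (W.side h m ↔ W.side h c) := by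
  obtain ⟨hab, -, hbc⟩ := hm
  have hamb := (W.dist_eq_add_iff_between a m b).mp hab h
  have hbmc := (W.dist_eq_add_iff_between b m c).mp hbc h hbm
  simp only [Sep] at *
  tauto

lemma between_medians {x y z z' p q : W.V} (hz : W.Between x z y) (hp : W.IsMedian x z z' p)
    (hq : W.IsMedian y z z' q) : W.Between p z q := by
  intro h hpz hzq
  have hxp := hp.side_iff_of_sep hpz.symm
  have hyq := hq.side_iff_of_sep hzq
  simp only [Sep] at *
  exact hz h (by tauto) (by tauto)

lemma isMedian_self_of_between {a z b : W.V} (hz : W.Between a z b) : W.IsMedian z a b z := by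
  refine ⟨?_, ?_, (W.dist_eq_add_iff_between a z b).mpr hz⟩ <;> rw [dist_self, zero_add]

end CCC

theorem stmt_11_general (W : CCC) (med : W.V → W.V → W.V → W.V)
    (hmed : ∀ a b c m : W.V, W.IsMedian a b c m ↔ m = med a b c)
    (x y : W.V) (γ₁ : (W.oneSkeleton).Walk x y)
    (h₁ : γ₁.length = W.dist x y)
    (z z' : W.V) (hz : z ∈ γ₁.support) :
    med z (med x z z') (med y z z') = z := by
  have hp := (hmed x z z' _).mpr rfl
  have hq := (hmed y z z' _).mpr rfl
  have hzxy := W.between_of_mem_support_of_length_eq γ₁ h₁ hz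
  exact ((hmed _ _ _ z).mp (W.isMedian_self_of_between (W.between_medians hzxy hp hq))).symm

/-- For any bigon `{γ₁, γ₂}` with endpoints `x`, `y` in (the median 1-skeleton of) a
CAT(0) cube complex and any `z ∈ γ₁`, `z' ∈ γ₂`, one has
`z = m(z, m(x,z,z'), m(y,z,z'))`. -/
theorem stmt_11 (W : CCC) (med : W.V → W.V → W.V → W.V)
    (hmed : ∀ a b c m : W.V, W.IsMedian a b c m ↔ m = med a b c)
    (x y : W.V) (γ₁ γ₂ : (W.oneSkeleton).Walk x y)
    (h₁ : γ₁.length = W.dist x y) (h₂ : γ₂.length = W.dist x y)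
    (z z' : W.V) (hz : z ∈ γ₁.support) (hz' : z' ∈ γ₂.support) :
    med z (med x z z') (med y z z') = z :=
  stmt_11_general W med hmed x y γ₁ h₁ z z' hz
end

section
/- Let Γ be a finite simplicial graph, C(Γ) the right-angled Coxeter group, and suppose the sequence of collections 𝔍ⁿ(Γ) stabilizes to the trivial decomposition 𝔍^∞(Γ) = (Γ). If C(Γ) acts on a graph witnessing relative hyperbolicity with respect to a collection of subgroups ℋ, such that every subgroup which is a direct product of two infinite subgroups lies in a peripheral subgroup, and two peripheral subgroups with infinite intersection coincide, and an element normalizing-up-to-infinite-intersection a peripheral subgroup lies in it, then some peripheral subgroup equals all of C(Γ). Hence C(Γ) is not relatively hyperbolic. -/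
variable {V : Type} [Fintype V] [DecidableEq V]

/-- A set of vertices spans a complete subgraph of `Γ`. -/
def IsCompleteSet (Γ : SimpleGraph V) (Λ : Set V) : Prop :=
  ∀ a ∈ Λ, ∀ b ∈ Λ, a ≠ b → Γ.Adj a b

/-- `cp Λ` is generated by `Λ` together with the vertices `v` whose link meets `Λ` in a
non-complete subgraph. -/
def cp (Γ : SimpleGraph V) (Λ : Set V) : Set V :=
  Λ ∪ {v : V | ¬ IsCompleteSet Γ (Γ.neighborSet v ∩ Λ)}

/-- A large join: a join `Λ₁ ∗ Λ₂` with neither factor complete. -/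
def IsLargeJoin (Γ : SimpleGraph V) (Λ : Set V) : Prop :=
  ∃ Λ₁ Λ₂ : Set V, Λ = Λ₁ ∪ Λ₂ ∧ Λ₁.Nonempty ∧ Λ₂.Nonempty ∧
    (∀ a ∈ Λ₁, ∀ b ∈ Λ₂, Γ.Adj a b) ∧
    ¬ IsCompleteSet Γ Λ₁ ∧ ¬ IsCompleteSet Γ Λ₂

/-- The sequence `𝔍ⁿ(Γ)`: start from the large joins; at each step, group the subgraphs
into components of the relation "non-complete intersection" and replace each component
by `cp` of its union. -/
def Jseq (Γ : SimpleGraph V) : ℕ → Set (Set V)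
  | 0 => {Λ | IsLargeJoin Γ Λ}
  | n + 1 =>
    {Λ | ∃ A ∈ Jseq Γ n, Λ = cp Γ (⋃₀ {B | B ∈ Jseq Γ n ∧
      Relation.EqvGen
        (fun X Y => X ∈ Jseq Γ n ∧ Y ∈ Jseq Γ n ∧ ¬ IsCompleteSet Γ (X ∩ Y)) A B})}

/-- Relators of the right-angled Coxeter group `C(Γ)`. -/
def racgRels (Γ : SimpleGraph V) : Set (FreeGroup V) :=
  {r | (∃ v : V, r = FreeGroup.of v * FreeGroup.of v) ∨
    (∃ v w : V, Γ.Adj v w ∧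
      r = FreeGroup.of v * FreeGroup.of w * (FreeGroup.of v)⁻¹ * (FreeGroup.of w)⁻¹)}

/-- The right-angled Coxeter group of a finite graph `Γ`. -/
abbrev RACG (Γ : SimpleGraph V) := PresentedGroup (racgRels Γ)

namespace Stmt17Aux

noncomputable def yPerm : Equiv.Perm ℤ :=
  Function.Involutive.toPerm (fun z => 1 - z) (fun z => by ring)

def xPerm : Equiv.Perm ℤ := Equiv.neg ℤ

lemma xy_apply (z : ℤ) : (xPerm * yPerm) z = z - 1 := by
  simp only [Equiv.Perm.mul_apply]
  show -(1 - z) = z - 1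
  ring

lemma x_sq : xPerm * xPerm = 1 := by
  ext z
  show (-(-z) : ℤ) = z
  ring

lemma y_sq : yPerm * yPerm = 1 := by
  ext z
  show (1 - (1 - z) : ℤ) = z
  ring

lemma xy_pow_apply (n : ℕ) (z : ℤ) : ((xPerm * yPerm) ^ n) z = z - n := by
  induction n generalizing z with
  | zero => simp
  | succ k ih =>
    rw [pow_succ, Equiv.Perm.mul_apply, xy_apply, ih]
    push_cast
    ring

lemma closure_xy_infinite :
    ((Subgroup.closure {xPerm, yPerm} : Subgroup (Equiv.Perm ℤ)) : Set (Equiv.Perm ℤ)).Infinite := by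
  apply Set.infinite_of_injective_forall_mem (f := fun n : ℕ => (xPerm * yPerm) ^ n)
  case hi =>
    intro m n hmn
    have hmn' : (xPerm * yPerm) ^ m = (xPerm * yPerm) ^ n := hmn
    have : ((xPerm * yPerm) ^ m) 0 = ((xPerm * yPerm) ^ n) 0 := by rw [hmn']
    rw [xy_pow_apply, xy_pow_apply] at this
    omega
  case hf =>
    intro n
    exact pow_mem (mul_mem (Subgroup.subset_closure (by simp))
      (Subgroup.subset_closure (by simp))) n

/-- The generator of `RACG Γ` associated to a vertex. -/
abbrev gen (Γ : SimpleGraph V) (v : V) : RACG Γ := PresentedGroup.of v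

lemma gen_rel_one (Γ : SimpleGraph V) {r : FreeGroup V} (hr : r ∈ racgRels Γ) :
    (QuotientGroup.mk r : RACG Γ) = 1 :=
  (QuotientGroup.eq_one_iff r).mpr (Subgroup.subset_normalClosure hr)

lemma gen_comm (Γ : SimpleGraph V) {v w : V} (h : Γ.Adj v w) :
    Commute (gen Γ v) (gen Γ w) := by
  have h1 : (QuotientGroup.mk (FreeGroup.of v * FreeGroup.of w * (FreeGroup.of v)⁻¹ *
      (FreeGroup.of w)⁻¹) : RACG Γ) = 1 :=
    gen_rel_one Γ (Or.inr ⟨v, w, h, rfl⟩)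
  have h2 : gen Γ v * gen Γ w * (gen Γ v)⁻¹ * (gen Γ w)⁻¹ = 1 := h1
  have h3 : (gen Γ v * gen Γ w) * (gen Γ w * gen Γ v)⁻¹ = 1 := by
    rw [mul_inv_rev, ← mul_assoc]
    exact h2
  exact mul_inv_eq_one.mp h3

lemma badHom (Γ : SimpleGraph V) {a b : V} (hne : a ≠ b) (hna : ¬ Γ.Adj a b) :
    ∃ f : RACG Γ →* Equiv.Perm ℤ, f (gen Γ a) = xPerm ∧ f (gen Γ b) = yPerm := by
  classical
  set φ : V → Equiv.Perm ℤ := fun u => if u = a then xPerm else if u = b then yPerm else 1 with hφ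
  have hsq : ∀ u : V, φ u * φ u = 1 := by
    intro u
    by_cases h1 : u = a
    · simp [hφ, h1, x_sq]
    · by_cases h2 : u = b
      · simp [hφ, h1, h2, Ne.symm hne, y_sq]
      · simp [hφ, h1, h2]
  have hcomm : ∀ v w : V, Γ.Adj v w → Commute (φ v) (φ w) := by
    intro v w hadj
    by_cases hwa : w = a
    · by_cases hva : v = a
      · exact absurd (hva.trans hwa.symm) hadj.ne
      · by_cases hvb : v = b
        · exact absurd (by rw [hvb, hwa] at hadj; exact hadj.symm) hna
        · have h1 : φ v = 1 := by simp [hφ, hva, hvb]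
          rw [h1]; exact Commute.one_left _
    · by_cases hwb : w = b
      · by_cases hva : v = a
        · exact absurd (by rw [hva, hwb] at hadj; exact hadj) hna
        · by_cases hvb : v = b
          · exact absurd (hvb.trans hwb.symm) hadj.ne
          · have h1 : φ v = 1 := by simp [hφ, hva, hvb]
            rw [h1]; exact Commute.one_left _
      · have h1 : φ w = 1 := by simp [hφ, hwa, hwb]
        rw [h1]; exact Commute.one_right _
  have hrel : ∀ r ∈ racgRels Γ, FreeGroup.lift φ r = 1 := by
    rintro r (⟨v, rfl⟩ | ⟨v, w, hadj, rfl⟩)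
    · simp only [map_mul, FreeGroup.lift_apply_of]
      exact hsq v
    · simp only [map_mul, map_inv, FreeGroup.lift_apply_of]
      have hc := (hcomm v w hadj).eq
      rw [hc]
      group
  refine ⟨PresentedGroup.toGroup hrel, ?_, ?_⟩
  · rw [show gen Γ a = PresentedGroup.of a from rfl, PresentedGroup.toGroup.of]
    simp [hφ]
  · rw [show gen Γ b = PresentedGroup.of b from rfl, PresentedGroup.toGroup.of]
    simp [hφ, hne.symm]

lemma pair_infinite (Γ : SimpleGraph V) {a b : V} (hne : a ≠ b) (hna : ¬ Γ.Adj a b) :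
    ((Subgroup.closure {gen Γ a, gen Γ b} : Subgroup (RACG Γ)) : Set (RACG Γ)).Infinite := by
  obtain ⟨f, hfa, hfb⟩ := badHom Γ hne hna
  have hmap : (Subgroup.closure {gen Γ a, gen Γ b}).map f
      = Subgroup.closure {xPerm, yPerm} := by
    rw [MonoidHom.map_closure, Set.image_pair, hfa, hfb]
  have himg : (f '' ((Subgroup.closure {gen Γ a, gen Γ b} : Subgroup (RACG Γ)) :
      Set (RACG Γ))).Infinite := by
    rw [← Subgroup.coe_map, hmap]
    exact closure_xy_infinite
  exact Set.Infinite.of_image f himg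

lemma infinite_of_le {G : Type*} [Group G] {H K : Subgroup G} (h : H ≤ K)
    (hH : (H : Set G).Infinite) : Infinite ↥K :=
  Set.infinite_coe_iff.mpr (hH.mono h)

lemma closure_commute {G : Type*} [Group G] {S T : Set G}
    (h : ∀ s ∈ S, ∀ t ∈ T, Commute s t) :
    ∀ a ∈ Subgroup.closure S, ∀ b ∈ Subgroup.closure T, Commute a b := by
  have h1 : Subgroup.closure T ≤ Subgroup.centralizer S :=
    (Subgroup.closure_le _).mpr fun t ht =>
      Subgroup.mem_centralizer_iff.mpr fun s hs => (h s hs t ht).eq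
  have h2 : Subgroup.closure S ≤ Subgroup.centralizer (Subgroup.closure T : Set G) :=
    (Subgroup.closure_le _).mpr fun s hs =>
      Subgroup.mem_centralizer_iff.mpr fun x hx =>
        (Subgroup.mem_centralizer_iff.mp (h1 hx) s hs).symm
  intro a ha b hb
  exact (Subgroup.mem_centralizer_iff.mp (h2 ha) b hb).symm

lemma not_complete_bad {Γ : SimpleGraph V} {Λ : Set V} (h : ¬ IsCompleteSet Γ Λ) :
    ∃ a ∈ Λ, ∃ b ∈ Λ, a ≠ b ∧ ¬ Γ.Adj a b := by
  rw [IsCompleteSet] at h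
  push_neg at h
  exact h

lemma main (Γ : SimpleGraph V) (ℋ : Set (Subgroup (RACG Γ)))
    (hprod : ∀ A B : Subgroup (RACG Γ), Infinite ↥A → Infinite ↥B →
      (∀ a ∈ A, ∀ b ∈ B, Commute a b) → ∃ P ∈ ℋ, A ≤ P ∧ B ≤ P)
    (hcoincide : ∀ P ∈ ℋ, ∀ Q ∈ ℋ, Infinite ↥(P ⊓ Q) → P = Q)
    (hconj : ∀ P ∈ ℋ, ∀ g : RACG Γ,
      Infinite ↥(P ⊓ P.map (MulAut.conj g).toMonoidHom) → g ∈ P) :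
    ∀ n : ℕ, ∀ Λ ∈ Jseq Γ n,
      (∃ a ∈ Λ, ∃ b ∈ Λ, a ≠ b ∧ ¬ Γ.Adj a b) ∧
      ∃ P ∈ ℋ, Subgroup.closure (gen Γ '' Λ) ≤ P := by
  intro n
  induction n with
  | zero =>
    rintro Λ ⟨Λ₁, Λ₂, rfl, _, _, hjoin, h1nc, h2nc⟩
    obtain ⟨a, ha, b, hb, hab, hnadj⟩ := not_complete_bad h1nc
    obtain ⟨c, hc, d, hd, hcd, hnadjcd⟩ := not_complete_bad h2nc
    refine ⟨⟨a, Or.inl ha, b, Or.inl hb, hab, hnadj⟩, ?_⟩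
    have hAinf : Infinite ↥(Subgroup.closure (gen Γ '' Λ₁)) :=
      infinite_of_le (Subgroup.closure_mono (Set.pair_subset
        (Set.mem_image_of_mem _ ha) (Set.mem_image_of_mem _ hb))) (pair_infinite Γ hab hnadj)
    have hBinf : Infinite ↥(Subgroup.closure (gen Γ '' Λ₂)) :=
      infinite_of_le (Subgroup.closure_mono (Set.pair_subset
        (Set.mem_image_of_mem _ hc) (Set.mem_image_of_mem _ hd))) (pair_infinite Γ hcd hnadjcd)
    have hcomm : ∀ x ∈ Subgroup.closure (gen Γ '' Λ₁),
        ∀ y ∈ Subgroup.closure (gen Γ '' Λ₂), Commute x y := by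
      apply closure_commute
      rintro _ ⟨u, hu, rfl⟩ _ ⟨w, hw, rfl⟩
      exact gen_comm Γ (hjoin u hu w hw)
    obtain ⟨P, hP, hAP, hBP⟩ := hprod _ _ hAinf hBinf hcomm
    refine ⟨P, hP, (Subgroup.closure_le _).mpr ?_⟩
    rw [Set.image_union]
    exact Set.union_subset (fun x hx => hAP (Subgroup.subset_closure hx))
      (fun x hx => hBP (Subgroup.subset_closure hx))
  | succ n ih =>
    rintro Λ ⟨A₀, hA₀, rfl⟩
    set R : Set V → Set V → Prop := fun X Y =>
      X ∈ Jseq Γ n ∧ Y ∈ Jseq Γ n ∧ ¬ IsCompleteSet Γ (X ∩ Y) with hR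
    set Ω : Set (Set V) := {B | B ∈ Jseq Γ n ∧ Relation.EqvGen R A₀ B} with hΩ
    set U : Set V := ⋃₀ Ω with hU
    have hA₀Ω : A₀ ∈ Ω := ⟨hA₀, Relation.EqvGen.refl A₀⟩
    obtain ⟨⟨a, haA, b, hbA, hab, hnadj⟩, P₀, hP₀, hA₀P⟩ := ih A₀ hA₀
    have haU : a ∈ U := ⟨A₀, hA₀Ω, haA⟩
    have hbU : b ∈ U := ⟨A₀, hA₀Ω, hbA⟩
    -- transfer along one step of the relation
    have transfer : ∀ X Y : Set V, Subgroup.closure (gen Γ '' X) ≤ P₀ → R X Y →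
        Subgroup.closure (gen Γ '' Y) ≤ P₀ := by
      intro X Y hX hXY
      obtain ⟨_, Q, hQ, hYQ⟩ := ih Y hXY.2.1
      obtain ⟨c', hc', d', hd', hcd', hnadj'⟩ := not_complete_bad hXY.2.2
      have hDle : Subgroup.closure {gen Γ c', gen Γ d'} ≤ P₀ ⊓ Q := by
        apply (Subgroup.closure_le _).mpr
        apply Set.pair_subset
        · exact ⟨hX (Subgroup.subset_closure (Set.mem_image_of_mem _ hc'.1)),
            hYQ (Subgroup.subset_closure (Set.mem_image_of_mem _ hc'.2))⟩
        · exact ⟨hX (Subgroup.subset_closure (Set.mem_image_of_mem _ hd'.1)),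
            hYQ (Subgroup.subset_closure (Set.mem_image_of_mem _ hd'.2))⟩
      have hinf : Infinite ↥(P₀ ⊓ Q) :=
        infinite_of_le hDle (pair_infinite Γ hcd' hnadj')
      rw [hcoincide P₀ hP₀ Q hQ hinf]
      exact hYQ
    have key : ∀ X Y : Set V, Relation.EqvGen R X Y →
        (Subgroup.closure (gen Γ '' X) ≤ P₀ ↔ Subgroup.closure (gen Γ '' Y) ≤ P₀) := by
      intro X Y h
      induction h with
      | rel x y hxy =>
        refine ⟨fun h' => transfer x y h' hxy, fun h' => transfer y x h' ?_⟩
        exact ⟨hxy.2.1, hxy.1, by rw [Set.inter_comm]; exact hxy.2.2⟩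
      | refl x => exact Iff.rfl
      | symm x y _ ih' => exact ih'.symm
      | trans x y z _ _ ih1 ih2 => exact ih1.trans ih2
    have hUsub : Subgroup.closure (gen Γ '' U) ≤ P₀ := by
      apply (Subgroup.closure_le _).mpr
      rintro _ ⟨w, ⟨B, hBΩ, hwB⟩, rfl⟩
      exact (key A₀ B hBΩ.2).mp hA₀P (Subgroup.subset_closure (Set.mem_image_of_mem _ hwB))
    refine ⟨⟨a, Or.inl haU, b, Or.inl hbU, hab, hnadj⟩, P₀, hP₀, ?_⟩
    apply (Subgroup.closure_le _).mpr
    rintro _ ⟨w, hw, rfl⟩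
    have hw' : w ∈ U ∨ ¬ IsCompleteSet Γ (Γ.neighborSet w ∩ U) := hw
    rcases hw' with hw' | hw'
    · exact hUsub (Subgroup.subset_closure (Set.mem_image_of_mem _ hw'))
    · obtain ⟨c', hc', d', hd', hcd', hnadj'⟩ := not_complete_bad hw'
      have hcP : gen Γ c' ∈ P₀ :=
        hUsub (Subgroup.subset_closure (Set.mem_image_of_mem _ hc'.2))
      have hdP : gen Γ d' ∈ P₀ :=
        hUsub (Subgroup.subset_closure (Set.mem_image_of_mem _ hd'.2))
      have hfix : ∀ u : V, u ∈ Γ.neighborSet w → gen Γ u ∈ P₀ →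
          gen Γ u ∈ P₀.map (MulAut.conj (gen Γ w)).toMonoidHom := by
        intro u hu huP
        refine Subgroup.mem_map.mpr ⟨gen Γ u, huP, ?_⟩
        show gen Γ w * gen Γ u * (gen Γ w)⁻¹ = gen Γ u
        rw [(gen_comm Γ hu).eq]
        group
      have hDle : Subgroup.closure {gen Γ c', gen Γ d'} ≤
          P₀ ⊓ P₀.map (MulAut.conj (gen Γ w)).toMonoidHom := by
        apply (Subgroup.closure_le _).mpr
        apply Set.pair_subset
        · exact ⟨hcP, hfix c' hc'.1 hcP⟩
        · exact ⟨hdP, hfix d' hd'.1 hdP⟩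
      have hinf : Infinite ↥(P₀ ⊓ P₀.map (MulAut.conj (gen Γ w)).toMonoidHom) :=
        infinite_of_le hDle (pair_infinite Γ hcd' hnadj')
      exact hconj P₀ hP₀ (gen Γ w) hinf

end Stmt17Aux

/-- If the canonical join decomposition of the finite graph `Γ` stabilizes to the
trivial decomposition `𝔍^∞(Γ) = (Γ)`, and `C(Γ)` acts witnessing relative
hyperbolicity with respect to a collection `ℋ` of peripheral subgroups such that every
direct product of two infinite subgroups lies in a peripheral subgroup, two peripheral
subgroups with infinite intersection coincide, and an element `g` with
`P ∩ P^g` infinite for a peripheral `P` lies in `P`, then some peripheral subgroup is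
all of `C(Γ)` — hence `C(Γ)` is not relatively hyperbolic. -/
theorem stmt_17 (Γ : SimpleGraph V)
    (hstab : ∃ n : ℕ, Jseq Γ n = {(Set.univ : Set V)})
    (ℋ : Set (Subgroup (RACG Γ)))
    (hprod : ∀ A B : Subgroup (RACG Γ), Infinite ↥A → Infinite ↥B →
      (∀ a ∈ A, ∀ b ∈ B, Commute a b) → ∃ P ∈ ℋ, A ≤ P ∧ B ≤ P)
    (hcoincide : ∀ P ∈ ℋ, ∀ Q ∈ ℋ, Infinite ↥(P ⊓ Q) → P = Q)
    (hconj : ∀ P ∈ ℋ, ∀ g : RACG Γ,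
      Infinite ↥(P ⊓ P.map (MulAut.conj g).toMonoidHom) → g ∈ P) :
    ∃ P ∈ ℋ, P = ⊤ := by
  obtain ⟨n, hn⟩ := hstab
  have huniv : (Set.univ : Set V) ∈ Jseq Γ n := by rw [hn]; rfl
  obtain ⟨_, P, hP, hle⟩ := Stmt17Aux.main Γ ℋ hprod hcoincide hconj n Set.univ huniv
  refine ⟨P, hP, ?_⟩
  have htop : Subgroup.closure (Stmt17Aux.gen Γ '' Set.univ) = ⊤ := by
    rw [Set.image_univ]
    exact PresentedGroup.closure_range_of _
  exact le_antisymm le_top (htop ▸ hle)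
end
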